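/- arXiv:1504.00285 — 7 statements merged into one kernel-verified Lean document; each statement's English description precedes it below -/
import Mathlib

section
/- Let K be a field and let (p₁,φ₁), (p₂,φ₂), (p₃,φ₃) be a triple of flags of P(K³) which are pairwise opposite, i.e. φᵢ(pⱼ) ≠ 0 for all i ≠ j. Then the triple is generic (the vectors p₁,p₂,p₃ are linearly independent and the forms φ₁,φ₂,φ₃ are linearly independent) if and only if Tri(F₁,F₂,F₃) ≠ −1. In particular: if p₁,p₂,p₃ are linearly dependent then Tri(F₁,F₂,F₃) = −1, and if φ₁,φ₂,φ₃ are linearly dependent then Tri(F₁,F₂,F₃) = −1. -/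
/-- The algebraic triple ratio of a triple of flags of `P(K³)`, represented by
vectors `p₁,p₂,p₃ ∈ K³` and linear forms `φ₁,φ₂,φ₃` on `K³`. -/
def Tri {K : Type*} [Field K] (p₁ p₂ p₃ : Fin 3 → K)
    (φ₁ φ₂ φ₃ : (Fin 3 → K) →ₗ[K] K) : K :=
  (φ₁ p₂ * φ₂ p₃ * φ₃ p₁) / (φ₁ p₃ * φ₂ p₁ * φ₃ p₂)

/-- A triple of pairwise opposite flags is generic if and only if its triple ratio
is different from `−1`; in particular if the points are collinear, or the lines
concurrent, the triple ratio is `−1`. -/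
theorem tri_generic_iff_ne_neg_one {K : Type*} [Field K] (p₁ p₂ p₃ : Fin 3 → K)
    (φ₁ φ₂ φ₃ : (Fin 3 → K) →ₗ[K] K)
    (hp₁ : p₁ ≠ 0) (hp₂ : p₂ ≠ 0) (hp₃ : p₃ ≠ 0)
    (hφ₁ : φ₁ ≠ 0) (hφ₂ : φ₂ ≠ 0) (hφ₃ : φ₃ ≠ 0)
    (hf₁ : φ₁ p₁ = 0) (hf₂ : φ₂ p₂ = 0) (hf₃ : φ₃ p₃ = 0)
    (h12 : φ₁ p₂ ≠ 0) (h13 : φ₁ p₃ ≠ 0) (h21 : φ₂ p₁ ≠ 0)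
    (h23 : φ₂ p₃ ≠ 0) (h31 : φ₃ p₁ ≠ 0) (h32 : φ₃ p₂ ≠ 0) :
    ((LinearIndependent K ![p₁, p₂, p₃] ∧ LinearIndependent K ![φ₁, φ₂, φ₃]) ↔
      Tri p₁ p₂ p₃ φ₁ φ₂ φ₃ ≠ -1) ∧
    (¬ LinearIndependent K ![p₁, p₂, p₃] → Tri p₁ p₂ p₃ φ₁ φ₂ φ₃ = -1) ∧
    (¬ LinearIndependent K ![φ₁, φ₂, φ₃] → Tri p₁ p₂ p₃ φ₁ φ₂ φ₃ = -1) := by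
  have hD : φ₁ p₃ * φ₂ p₁ * φ₃ p₂ ≠ 0 := mul_ne_zero (mul_ne_zero h13 h21) h32
  -- If the points are linearly dependent, the triple ratio is -1.
  have keyA : ¬ LinearIndependent K ![p₁, p₂, p₃] → Tri p₁ p₂ p₃ φ₁ φ₂ φ₃ = -1 := by
    intro h
    rw [Fintype.not_linearIndependent_iff] at h
    obtain ⟨g, hsum, i, hi⟩ := h
    rw [Fin.sum_univ_three] at hsum
    simp only [Matrix.cons_val_zero, Matrix.cons_val_one, Matrix.head_cons,
      Matrix.cons_val_two, Matrix.tail_cons] at hsum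
    have e1 : g 1 * φ₁ p₂ + g 2 * φ₁ p₃ = 0 := by
      have := congrArg φ₁ hsum
      simpa [map_add, map_smul, hf₁, smul_eq_mul] using this
    have e2 : g 0 * φ₂ p₁ + g 2 * φ₂ p₃ = 0 := by
      have := congrArg φ₂ hsum
      simpa [map_add, map_smul, hf₂, smul_eq_mul] using this
    have e3 : g 0 * φ₃ p₁ + g 1 * φ₃ p₂ = 0 := by
      have := congrArg φ₃ hsum
      simpa [map_add, map_smul, hf₃, smul_eq_mul] using this
    have hg0 : g 0 ≠ 0 := by
      intro h0
      have hg2 : g 2 = 0 := by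
        have : g 2 * φ₂ p₃ = 0 := by linear_combination e2 - φ₂ p₁ * h0
        exact (mul_eq_zero.1 this).resolve_right h23
      have hg1 : g 1 = 0 := by
        have : g 1 * φ₃ p₂ = 0 := by linear_combination e3 - φ₃ p₁ * h0
        exact (mul_eq_zero.1 this).resolve_right h32
      fin_cases i <;> simp_all
    have hg1 : g 1 ≠ 0 := by
      intro h1
      have : g 0 * φ₃ p₁ = 0 := by linear_combination e3 - φ₃ p₂ * h1
      exact hg0 ((mul_eq_zero.1 this).resolve_right h31)
    have hg2 : g 2 ≠ 0 := by
      intro h2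
      have : g 0 * φ₂ p₁ = 0 := by linear_combination e2 - φ₂ p₃ * h2
      exact hg0 ((mul_eq_zero.1 this).resolve_right h21)
    have e1' : g 1 * φ₁ p₂ = -(g 2 * φ₁ p₃) := by linear_combination e1
    have e2' : g 2 * φ₂ p₃ = -(g 0 * φ₂ p₁) := by linear_combination e2
    have e3' : g 0 * φ₃ p₁ = -(g 1 * φ₃ p₂) := by linear_combination e3
    have hprod : (g 1 * φ₁ p₂) * (g 2 * φ₂ p₃) * (g 0 * φ₃ p₁)
        = (-(g 2 * φ₁ p₃)) * (-(g 0 * φ₂ p₁)) * (-(g 1 * φ₃ p₂)) := by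
      rw [e1', e2', e3']
    have key : φ₁ p₂ * φ₂ p₃ * φ₃ p₁ = -(φ₁ p₃ * φ₂ p₁ * φ₃ p₂) := by
      have hg : g 0 * g 1 * g 2 ≠ 0 := mul_ne_zero (mul_ne_zero hg0 hg1) hg2
      apply mul_left_cancel₀ hg
      linear_combination hprod
    show _ / _ = -1
    rw [div_eq_iff hD]
    linear_combination key
  -- If the forms are linearly dependent, the triple ratio is -1.
  have keyB : ¬ LinearIndependent K ![φ₁, φ₂, φ₃] → Tri p₁ p₂ p₃ φ₁ φ₂ φ₃ = -1 := by
    intro h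
    rw [Fintype.not_linearIndependent_iff] at h
    obtain ⟨g, hsum, i, hi⟩ := h
    rw [Fin.sum_univ_three] at hsum
    simp only [Matrix.cons_val_zero, Matrix.cons_val_one, Matrix.head_cons,
      Matrix.cons_val_two, Matrix.tail_cons] at hsum
    have e1 : g 1 * φ₂ p₁ + g 2 * φ₃ p₁ = 0 := by
      have := LinearMap.congr_fun hsum p₁
      simpa [LinearMap.add_apply, LinearMap.smul_apply, hf₁, smul_eq_mul] using this
    have e2 : g 0 * φ₁ p₂ + g 2 * φ₃ p₂ = 0 := by
      have := LinearMap.congr_fun hsum p₂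
      simpa [LinearMap.add_apply, LinearMap.smul_apply, hf₂, smul_eq_mul] using this
    have e3 : g 0 * φ₁ p₃ + g 1 * φ₂ p₃ = 0 := by
      have := LinearMap.congr_fun hsum p₃
      simpa [LinearMap.add_apply, LinearMap.smul_apply, hf₃, smul_eq_mul] using this
    have hg0 : g 0 ≠ 0 := by
      intro h0
      have hg2 : g 2 = 0 := by
        have : g 2 * φ₃ p₂ = 0 := by linear_combination e2 - φ₁ p₂ * h0
        exact (mul_eq_zero.1 this).resolve_right h32
      have hg1 : g 1 = 0 := by
        have : g 1 * φ₂ p₃ = 0 := by linear_combination e3 - φ₁ p₃ * h0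
        exact (mul_eq_zero.1 this).resolve_right h23
      fin_cases i <;> simp_all
    have hg1 : g 1 ≠ 0 := by
      intro h1
      have : g 0 * φ₁ p₃ = 0 := by linear_combination e3 - φ₂ p₃ * h1
      exact hg0 ((mul_eq_zero.1 this).resolve_right h13)
    have hg2 : g 2 ≠ 0 := by
      intro h2
      have : g 0 * φ₁ p₂ = 0 := by linear_combination e2 - φ₃ p₂ * h2
      exact hg0 ((mul_eq_zero.1 this).resolve_right h12)
    have e1' : g 2 * φ₃ p₁ = -(g 1 * φ₂ p₁) := by linear_combination e1
    have e2' : g 0 * φ₁ p₂ = -(g 2 * φ₃ p₂) := by linear_combination e2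
    have e3' : g 1 * φ₂ p₃ = -(g 0 * φ₁ p₃) := by linear_combination e3
    have hprod : (g 0 * φ₁ p₂) * (g 1 * φ₂ p₃) * (g 2 * φ₃ p₁)
        = (-(g 2 * φ₃ p₂)) * (-(g 0 * φ₁ p₃)) * (-(g 1 * φ₂ p₁)) := by
      rw [e1', e2', e3']
    have key : φ₁ p₂ * φ₂ p₃ * φ₃ p₁ = -(φ₁ p₃ * φ₂ p₁ * φ₃ p₂) := by
      have hg : g 0 * g 1 * g 2 ≠ 0 := mul_ne_zero (mul_ne_zero hg0 hg1) hg2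
      apply mul_left_cancel₀ hg
      linear_combination hprod
    show _ / _ = -1
    rw [div_eq_iff hD]
    linear_combination key
  -- If both are independent, the triple ratio is not -1.
  have keyC : LinearIndependent K ![p₁, p₂, p₃] → LinearIndependent K ![φ₁, φ₂, φ₃] →
      Tri p₁ p₂ p₃ φ₁ φ₂ φ₃ ≠ -1 := by
    intro hP hΦ heq
    have hND : φ₁ p₂ * φ₂ p₃ * φ₃ p₁ = -(φ₁ p₃ * φ₂ p₁ * φ₃ p₂) := by
      have := (div_eq_iff hD).1 heq
      linear_combination this
    -- explicit dependence among the forms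
    set g : Fin 3 → K := ![φ₂ p₁ * φ₃ p₂, φ₁ p₂ * φ₃ p₁, -(φ₁ p₂ * φ₂ p₁)] with hg
    have hcard : Fintype.card (Fin 3) = Module.finrank K (Fin 3 → K) := by
      simp
    let B := basisOfLinearIndependentOfCardEqFinrank hP hcard
    have hB : ⇑B = ![p₁, p₂, p₃] := coe_basisOfLinearIndependentOfCardEqFinrank hP hcard
    have hψ : (∑ i, g i • ![φ₁, φ₂, φ₃] i) = 0 := by
      apply B.ext
      intro i
      rw [hB]
      fin_cases i
      · simp [Fin.sum_univ_three, hg, LinearMap.add_apply,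
          LinearMap.smul_apply, smul_eq_mul, hf₁, hf₂, hf₃]
        ring
      · simp [Fin.sum_univ_three, hg, LinearMap.add_apply,
          LinearMap.smul_apply, smul_eq_mul, hf₁, hf₂, hf₃]
        ring
      · simp only [Fin.sum_univ_three, hg]
        simp [LinearMap.add_apply, LinearMap.smul_apply, smul_eq_mul, hf₁, hf₂, hf₃,
          sub_eq_zero]
        linear_combination hND
    have := Fintype.linearIndependent_iff.1 hΦ g hψ 0
    simp [hg] at this
    exact absurd this (by push_neg; exact ⟨h21, h32⟩)
  refine ⟨⟨fun ⟨hP, hΦ⟩ => keyC hP hΦ, fun h => ⟨?_, ?_⟩⟩, keyA, keyB⟩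
  · by_contra hc; exact h (keyA hc)
  · by_contra hc; exact h (keyB hc)
end

section
/- Let K be a field and let (p₁,φ₁), (p₂,φ₂), (p₃,φ₃) be a generic triple of flags of P(K³), with triple ratio Z = Tri(F₁,F₂,F₃). Then there exist an invertible linear automorphism g of K³ and nonzero scalars λ₁,λ₂,λ₃,μ₁,μ₂,μ₃ ∈ K such that g·p₁ = λ₁·(0,1,1), g·p₂ = λ₂·(Z,0,1), g·p₃ = λ₃·(1,1,0), and φᵢ∘g⁻¹ = μᵢ·eᵢ* for i = 1,2,3, where eᵢ* is the i-th coordinate linear form on K³. That is, every generic triple of flags is GL₃(K)-equivalent to the standard triple with parameter its triple ratio. -/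
/-- Every generic triple of flags of `P(K³)` is `GL₃(K)`-equivalent to the standard
triple of flags with parameter its triple ratio `Z`: the points go to
`(0,1,1)`, `(Z,0,1)`, `(1,1,0)` and the lines to the coordinate lines. -/
theorem generic_triple_standard_form {K : Type*} [Field K] (p₁ p₂ p₃ : Fin 3 → K)
    (φ₁ φ₂ φ₃ : (Fin 3 → K) →ₗ[K] K)
    (hp₁ : p₁ ≠ 0) (hp₂ : p₂ ≠ 0) (hp₃ : p₃ ≠ 0)
    (hφ₁ : φ₁ ≠ 0) (hφ₂ : φ₂ ≠ 0) (hφ₃ : φ₃ ≠ 0)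
    (hf₁ : φ₁ p₁ = 0) (hf₂ : φ₂ p₂ = 0) (hf₃ : φ₃ p₃ = 0)
    (h12 : φ₁ p₂ ≠ 0) (h13 : φ₁ p₃ ≠ 0) (h21 : φ₂ p₁ ≠ 0)
    (h23 : φ₂ p₃ ≠ 0) (h31 : φ₃ p₁ ≠ 0) (h32 : φ₃ p₂ ≠ 0)
    (hgenp : LinearIndependent K ![p₁, p₂, p₃])
    (hgenφ : LinearIndependent K ![φ₁, φ₂, φ₃]) :
    ∃ (g : (Fin 3 → K) ≃ₗ[K] (Fin 3 → K)) (l₁ l₂ l₃ μ₁ μ₂ μ₃ : K),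
      l₁ ≠ 0 ∧ l₂ ≠ 0 ∧ l₃ ≠ 0 ∧ μ₁ ≠ 0 ∧ μ₂ ≠ 0 ∧ μ₃ ≠ 0 ∧
      g p₁ = l₁ • ![0, 1, 1] ∧
      g p₂ = l₂ • ![Tri p₁ p₂ p₃ φ₁ φ₂ φ₃, 0, 1] ∧
      g p₃ = l₃ • ![1, 1, 0] ∧
      φ₁ ∘ₗ (g.symm : (Fin 3 → K) →ₗ[K] (Fin 3 → K)) =
        μ₁ • (LinearMap.proj 0 : (Fin 3 → K) →ₗ[K] K) ∧
      φ₂ ∘ₗ (g.symm : (Fin 3 → K) →ₗ[K] (Fin 3 → K)) =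
        μ₂ • (LinearMap.proj 1 : (Fin 3 → K) →ₗ[K] K) ∧
      φ₃ ∘ₗ (g.symm : (Fin 3 → K) →ₗ[K] (Fin 3 → K)) =
        μ₃ • (LinearMap.proj 2 : (Fin 3 → K) →ₗ[K] K) := by
  set c₁ : K := 1 with hc₁def
  set c₂ : K := φ₁ p₃ / φ₂ p₃ with hc₂def
  set c₃ : K := φ₁ p₃ * φ₂ p₁ / (φ₂ p₃ * φ₃ p₁) with hc₃def
  have hc₁ : c₁ ≠ 0 := one_ne_zero
  have hc₂ : c₂ ≠ 0 := div_ne_zero h13 h23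
  have hc₃ : c₃ ≠ 0 := div_ne_zero (mul_ne_zero h13 h21) (mul_ne_zero h23 h31)
  set f : (Fin 3 → K) →ₗ[K] (Fin 3 → K) :=
    LinearMap.pi ![c₁ • φ₁, c₂ • φ₂, c₃ • φ₃] with hfdef
  have hf : ∀ x, f x = ![c₁ * φ₁ x, c₂ * φ₂ x, c₃ * φ₃ x] := by
    intro x; funext i; fin_cases i <;> simp [hfdef]
  have hB : Module.finrank K ((Fin 3 → K) →ₗ[K] K) = Fintype.card (Fin 3) := by
    simp [Module.finrank_linearMap]
  let B := basisOfLinearIndependentOfCardEqFinrank hgenφ hB.symm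
  have hBi : ∀ i, B i = ![φ₁, φ₂, φ₃] i := fun i =>
    congrFun (coe_basisOfLinearIndependentOfCardEqFinrank hgenφ hB.symm) i
  have hinj : Function.Injective f := by
    rw [← LinearMap.ker_eq_bot, LinearMap.ker_eq_bot']
    intro x hx
    have hx' : (![c₁ * φ₁ x, c₂ * φ₂ x, c₃ * φ₃ x] : Fin 3 → K) = 0 := by
      rw [← hf x, hx]
    have h1 : φ₁ x = 0 := by
      have := congrFun hx' 0; simp at this; tauto
    have h2 : φ₂ x = 0 := by
      have := congrFun hx' 1; simp at this; tauto
    have h3 : φ₃ x = 0 := by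
      have := congrFun hx' 2; simp at this; tauto
    have hall : ∀ ψ : Module.Dual K (Fin 3 → K), ψ x = 0 := by
      intro ψ
      have hrep := B.sum_repr ψ
      rw [← hrep]
      simp only [Finset.sum_apply, LinearMap.smul_apply, LinearMap.coe_sum, smul_eq_mul]
      apply Finset.sum_eq_zero
      intro i _
      have : (B i) x = 0 := by
        rw [hBi i]; fin_cases i <;> simpa
      rw [this, mul_zero]
    exact (Module.forall_dual_apply_eq_zero_iff K x).mp hall
  have hsurj : Function.Surjective f := (LinearMap.injective_iff_surjective).mp hinj
  refine ⟨LinearEquiv.ofBijective f ⟨hinj, hsurj⟩,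
    c₂ * φ₂ p₁, c₃ * φ₃ p₂, c₁ * φ₁ p₃, c₁⁻¹, c₂⁻¹, c₃⁻¹,
    mul_ne_zero hc₂ h21, mul_ne_zero hc₃ h32, mul_ne_zero hc₁ h13,
    inv_ne_zero hc₁, inv_ne_zero hc₂, inv_ne_zero hc₃, ?_, ?_, ?_, ?_, ?_, ?_⟩
  · show f p₁ = _
    rw [hf p₁]; funext i; fin_cases i <;>
      simp [hc₁def, hc₂def, hc₃def, hf₁] <;> field_simp <;> ring
  · show f p₂ = _
    rw [hf p₂]; funext i; fin_cases i <;>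
      simp [hc₁def, hc₂def, hc₃def, hf₂, Tri] <;> field_simp <;> ring
  · show f p₃ = _
    rw [hf p₃]; funext i; fin_cases i <;>
      simp [hc₁def, hc₂def, hc₃def, hf₃] <;> field_simp <;> ring
  all_goals {
    refine LinearMap.ext fun y => ?_
    set g := LinearEquiv.ofBijective f ⟨hinj, hsurj⟩ with hg
    have hy : f (g.symm y) = y := g.apply_symm_apply y
    rw [hf (g.symm y)] at hy
    have h0 := congrFun hy 0
    have h1 := congrFun hy 1
    have h2 := congrFun hy 2
    simp only [Matrix.cons_val_zero, Matrix.cons_val_one, Matrix.head_cons,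
      Matrix.cons_val_two, Matrix.tail_cons] at h0 h1 h2
    simp only [LinearMap.comp_apply, LinearMap.smul_apply, LinearMap.proj_apply,
      LinearEquiv.coe_coe, smul_eq_mul]
    first
    | (rw [← h0]; field_simp [hc₁def])
    | (rw [← h1]; field_simp)
    | (rw [← h2]; field_simp)
  }
end

section
/- Let K be a field equipped with a nonarchimedean absolute value v, and let a₁,a₂,a₃,a₄ ∈ K be pairwise distinct. If v(Bir(a₁,a₂,a₃,a₄)) > 1, then v(Bir(a₁,a₃,a₄,a₂)) = 1 and v(Bir(a₁,a₄,a₂,a₃)) = v(Bir(a₁,a₂,a₃,a₄))⁻¹. (This is the ultrametricity property of the logarithmic cross ratio: if log v(Bir(a₁,a₂,a₃,a₄)) > 0 then log v(Bir(a₁,a₃,a₄,a₂)) = 0 and log v(Bir(a₁,a₄,a₂,a₃)) = −log v(Bir(a₁,a₂,a₃,a₄)).) -/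
/-- The cross ratio of four points of `K`, with convention
`Bir(∞,−1,0,z) = z`. -/
def Bir {K : Type*} [Field K] (a₁ a₂ a₃ a₄ : K) : K :=
  ((a₁ - a₂) * (a₃ - a₄)) / ((a₁ - a₄) * (a₂ - a₃))

/-- Ultrametricity of the logarithmic cross ratio: for a nonarchimedean absolute
value `v`, if `v(Bir(a₁,a₂,a₃,a₄)) > 1`, then `v(Bir(a₁,a₃,a₄,a₂)) = 1` and
`v(Bir(a₁,a₄,a₂,a₃)) = v(Bir(a₁,a₂,a₃,a₄))⁻¹`. -/
theorem bir_ultrametric {K : Type*} [Field K] (v : AbsoluteValue K ℝ)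
    (hna : IsNonarchimedean v) (a₁ a₂ a₃ a₄ : K)
    (h12 : a₁ ≠ a₂) (h13 : a₁ ≠ a₃) (h14 : a₁ ≠ a₄)
    (h23 : a₂ ≠ a₃) (h24 : a₂ ≠ a₄) (h34 : a₃ ≠ a₄)
    (hbig : 1 < v (Bir a₁ a₂ a₃ a₄)) :
    v (Bir a₁ a₃ a₄ a₂) = 1 ∧
    v (Bir a₁ a₄ a₂ a₃) = (v (Bir a₁ a₂ a₃ a₄))⁻¹ := by
  set A : K := (a₁ - a₂) * (a₃ - a₄) with hA
  set B : K := (a₁ - a₃) * (a₄ - a₂) with hB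
  set C : K := (a₁ - a₄) * (a₂ - a₃) with hC
  have hAne : A ≠ 0 := mul_ne_zero (sub_ne_zero.2 h12) (sub_ne_zero.2 h34)
  have hBne : B ≠ 0 := mul_ne_zero (sub_ne_zero.2 h13) (sub_ne_zero.2 h24.symm)
  have hCne : C ≠ 0 := mul_ne_zero (sub_ne_zero.2 h14) (sub_ne_zero.2 h23)
  have hvA : 0 < v A := v.pos hAne
  have hvB : 0 < v B := v.pos hBne
  have hvC : 0 < v C := v.pos hCne
  have hsum : A + B + C = 0 := by rw [hA, hB, hC]; ring
  have hval1 : v (Bir a₁ a₂ a₃ a₄) = v A / v C := by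
    rw [Bir, map_div₀]
  have hCA : v C < v A := by
    have := hbig
    rw [hval1, lt_div_iff₀ hvC, one_mul] at this
    exact this
  have hBA : v B = v A := by
    have h1 : v B ≤ v A := by
      have : B = -(A + C) := by linear_combination -hsum
      rw [this, v.map_neg]
      exact le_trans (hna A C) (max_le le_rfl hCA.le)
    have h2 : v A ≤ v B := by
      have : A = -(B + C) := by linear_combination -hsum
      rw [this, v.map_neg]
      refine le_trans (hna B C) (max_le le_rfl ?_)
      by_contra hcon
      push_neg at hcon
      have : A = -(B + C) := by linear_combination -hsum
      have hAle : v A ≤ max (v B) (v C) := by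
        rw [this, v.map_neg]; exact hna B C
      have : v A ≤ v C := le_trans hAle (max_le hcon.le le_rfl)
      exact absurd hCA (not_lt.2 this)
    linarith
  constructor
  · rw [Bir, map_div₀]
    have : v ((a₁ - a₃) * (a₄ - a₂)) = v B := rfl
    have h2 : v ((a₁ - a₂) * (a₃ - a₄)) = v A := rfl
    rw [this, h2, hBA, div_self hvA.ne']
  · rw [Bir, Bir, map_div₀, map_div₀]
    have h1 : v ((a₁ - a₄) * (a₂ - a₃)) = v C := rfl
    have h2 : v ((a₁ - a₃) * (a₄ - a₂)) = v B := rfl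
    have h3 : v ((a₁ - a₂) * (a₃ - a₄)) = v A := rfl
    rw [h1, h2, h3, hBA]
    field_simp
end

section
/- Let K be a field and let (p₁,φ₁), (p₂,φ₂), (p₃,φ₃) be a triple of flags of P(K³) (so pᵢ ∈ K³ nonzero, φᵢ nonzero linear forms, φᵢ(pᵢ) = 0). Then the following two conditions are equivalent (indices mod 3): (A) either φ_{i+1}(pᵢ) ≠ 0 for all i, or φ_{i−1}(pᵢ) ≠ 0 for all i; (B) the vectors p₁,p₂,p₃ are pairwise non-proportional, the forms φ₁,φ₂,φ₃ are pairwise non-proportional, for every choice of distinct indices i,j,k it is not the case that both φᵢ(p_k) = 0 and φⱼ(p_k) = 0 (no point lies on all three lines), and it is not the case that both φ_k(pᵢ) = 0 and φ_k(pⱼ) = 0 (no line contains all three points). -/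
/-!
Write `i ∼ k` when the point `p k` lies on the line `φ i`; this relation is reflexive.
Condition (A) says that all off-diagonal incidences lie on one of the two cyclic diagonals
`k = i + 1` or `k = i + 2` of `Fin 3`. On three indices this amounts to: no row or column carries
two off-diagonal incidences, and no two distinct indices are incident both ways. For two flags the
last condition is equivalent to distinctness of both the points and the lines: if `p i, p j` are
independent and both lines pass through both points, the lines are proportional, because the
forms vanishing on a plane of `K³` make up a line of the dual.
-/

open Module

theorem Module.Dual.exists_eq_smul_of_forall_apply_eq_zero {K V ι : Type*} [Field K]
    [AddCommGroup V] [Module K V] [FiniteDimensional K V] [Fintype ι] {b : ι → V}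
    (hb : LinearIndependent K b) (hV : finrank K V = Fintype.card ι + 1)
    {φ ψ : Dual K V} (hψ : ψ ≠ 0) (hφb : ∀ i, φ (b i) = 0) (hψb : ∀ i, ψ (b i) = 0) :
    ∃ c : K, φ = c • ψ := by
  set W := Submodule.span K (Set.range b)
  have mem_annihilator : ∀ f : Dual K V, (∀ i, f (b i) = 0) → f ∈ W.dualAnnihilator := by
    intro f hf
    rw [← SetLike.mem_coe, Submodule.coe_dualAnnihilator_span]
    rintro _ ⟨i, rfl⟩
    exact hf i
  have hrank : finrank K W.dualAnnihilator = 1 := by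
    have := Subspace.finrank_add_finrank_dualAnnihilator_eq W
    rw [finrank_span_eq_card hb] at this
    omega
  obtain ⟨c, hc⟩ := (finrank_eq_one_iff_of_nonzero' (⟨ψ, mem_annihilator ψ hψb⟩ : W.dualAnnihilator)
    (by simpa using hψ)).mp hrank ⟨φ, mem_annihilator φ hφb⟩
  exact ⟨c, congrArg Subtype.val hc.symm⟩

theorem LinearMap.map_eq_zero_iff_of_eq_smul {K M N : Type*} [Field K] [AddCommGroup M]
    [Module K M] [AddCommGroup N] [Module K N] (f : M →ₗ[K] N) {x y : M} {c : K}
    (hxy : x = c • y) (hx : x ≠ 0) : f x = 0 ↔ f y = 0 := by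
  have hc : c ≠ 0 := by rintro rfl; exact hx (by simp [hxy])
  rw [hxy, map_smul, smul_eq_zero_iff_right hc]

theorem flag_pair_distinct_iff {K V : Type*} [Field K] [AddCommGroup V] [Module K V]
    [FiniteDimensional K V] (hV : finrank K V = 3) {p q : V} {φ ψ : Dual K V}
    (hp : p ≠ 0) (hq : q ≠ 0) (hφ : φ ≠ 0) (hψ : ψ ≠ 0) (hφp : φ p = 0) (hψq : ψ q = 0) :
    ((∀ c : K, p ≠ c • q) ∧ (∀ c : K, φ ≠ c • ψ)) ↔ ¬(φ q = 0 ∧ ψ p = 0) := by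
  constructor
  · rintro ⟨hpq, hφψ⟩ ⟨hφq, hψp⟩
    have hli : LinearIndependent K ![p, q] :=
      linearIndependent_fin2.mpr ⟨by simpa using hq, fun a h => hpq a (by simpa using h.symm)⟩
    obtain ⟨c, hc⟩ := Dual.exists_eq_smul_of_forall_apply_eq_zero hli (by simp [hV]) hψ
      (Fin.forall_fin_two.mpr ⟨hφp, hφq⟩) (Fin.forall_fin_two.mpr ⟨hψp, hψq⟩)
    exact hφψ c hc
  · refine fun h => ⟨fun c hc => h ⟨?_, ?_⟩, fun c hc => h ⟨?_, ?_⟩⟩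
    · exact (φ.map_eq_zero_iff_of_eq_smul hc hp).mp hφp
    · rw [hc, map_smul, hψq, smul_zero]
    · rw [hc, LinearMap.smul_apply, hψq, smul_zero]
    · exact ((Dual.eval K V p).map_eq_zero_iff_of_eq_smul hc hφ).mp hφp

section
variable (R : Fin 3 → Fin 3 → Prop)

theorem fin_three_rel_of_forall_not_add {t : Fin 3} (ht : t ≠ 0) (h : ∀ i, ¬R (i + t) i) :
    (∀ i j, i ≠ j → ¬(R i j ∧ R j i)) ∧
      (∀ i j k, i ≠ j → j ≠ k → i ≠ k → ¬(R i k ∧ R j k)) ∧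
      (∀ i j k, i ≠ j → j ≠ k → i ≠ k → ¬(R k i ∧ R k j)) := by
  have off_diag : ∀ a b, a ≠ b → R a b → b = a + t := by
    intro a b hab hR
    have : a ≠ b + t := fun e => h b (e ▸ hR)
    grind
  refine ⟨?_, ?_, ?_⟩
  · rintro i j hij ⟨hij', hji'⟩
    have hj : j = i + t := off_diag i j hij hij'
    have hi : i = j + t := off_diag j i hij.symm hji'
    grind
  · rintro i j k hij hjk hik ⟨hik', hjk'⟩
    exact hij (add_right_cancel ((off_diag i k hik hik').symm.trans (off_diag j k hjk hjk')))
  · rintro i j k hij hjk hik ⟨hki', hkj'⟩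
    exact hij ((off_diag k i hik.symm hki').trans (off_diag k j hjk.symm hkj').symm)

theorem fin_three_rel_forall_or_forall_iff :
    ((∀ i, ¬R (i + 1) i) ∨ (∀ i, ¬R (i + 2) i)) ↔
      (∀ i j, i ≠ j → ¬(R i j ∧ R j i)) ∧
      (∀ i j k, i ≠ j → j ≠ k → i ≠ k → ¬(R i k ∧ R j k)) ∧
      (∀ i j k, i ≠ j → j ≠ k → i ≠ k → ¬(R k i ∧ R k j)) := by
  refine ⟨fun h => h.elim (fin_three_rel_of_forall_not_add R (by decide))
    (fin_three_rel_of_forall_not_add R (by decide)), ?_⟩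
  rintro ⟨hmutual, hcol, hrow⟩
  by_contra! ⟨⟨i, hi⟩, ⟨j, hj⟩⟩
  obtain rfl | rfl | rfl : i = j ∨ j = i + 1 ∨ j = i + 2 := by omega
  · exact hcol (i + 1) (i + 2) i (by omega) (by omega) (by omega) ⟨hi, hj⟩
  · rw [show i + 1 + 2 = i by omega] at hj
    exact hmutual (i + 1) i (by omega) ⟨hi, hj⟩
  · rw [show i + 2 + 2 = i + 1 by omega] at hj
    exact hrow i (i + 2) (i + 1) (by omega) (by omega) (by omega) ⟨hi, hj⟩

end

/-- Characterization of nondegenerate triples of flags of `P(K³)`: for a triple of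
flags `(p i, φ i)` (indices mod 3), the condition
“either `φ_{i+1}(p_i) ≠ 0` for all `i`, or `φ_{i−1}(p_i) ≠ 0` for all `i`”
is equivalent to: the points are pairwise distinct, the lines are pairwise
distinct, no point lies on all three lines, and no line contains all three
points. -/
theorem nondegenerate_triple_characterization {K : Type*} [Field K]
    (p : Fin 3 → (Fin 3 → K)) (φ : Fin 3 → ((Fin 3 → K) →ₗ[K] K))
    (hp : ∀ i, p i ≠ 0) (hφ : ∀ i, φ i ≠ 0) (hflag : ∀ i, φ i (p i) = 0) :
    ((∀ i, φ (i + 1) (p i) ≠ 0) ∨ (∀ i, φ (i + 2) (p i) ≠ 0)) ↔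
      ((∀ i j, i ≠ j → ∀ c : K, p i ≠ c • p j) ∧
       (∀ i j, i ≠ j → ∀ c : K, φ i ≠ c • φ j) ∧
       (∀ i j k : Fin 3, i ≠ j → j ≠ k → i ≠ k →
         ¬(φ i (p k) = 0 ∧ φ j (p k) = 0)) ∧
       (∀ i j k : Fin 3, i ≠ j → j ≠ k → i ≠ k →
         ¬(φ k (p i) = 0 ∧ φ k (p j) = 0))) := by
  have distinct_iff : ∀ i j, ((∀ c : K, p i ≠ c • p j) ∧ (∀ c : K, φ i ≠ c • φ j)) ↔
      ¬(φ i (p j) = 0 ∧ φ j (p i) = 0) := fun i j =>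
    flag_pair_distinct_iff (by simp) (hp i) (hp j) (hφ i) (hφ j) (hflag i) (hflag j)
  rw [fin_three_rel_forall_or_forall_iff (fun i k => φ i (p k) = 0)]
  simp only [← and_assoc]
  refine and_congr_left' (and_congr_left' ⟨fun h => ⟨?_, ?_⟩, ?_⟩)
  · exact fun i j hij => ((distinct_iff i j).mpr (h i j hij)).1
  · exact fun i j hij => ((distinct_iff i j).mpr (h i j hij)).2
  · exact fun ⟨hpts, hlines⟩ i j hij => (distinct_iff i j).mp ⟨hpts i j hij, hlines i j hij⟩
end

section
/- Let K be a field, let ψ_D and ψ_L be nonzero linear forms on K³ with kernels D = ker ψ_D and L = ker ψ_L, and let p ∈ K³ with ψ_D(p) ≠ 0 and ψ_L(p) ≠ 0 (a point on neither line). Let u₁,u₂,u₃,u₄ ∈ D be pairwise linearly independent nonzero vectors, and for each i let uᵢ' be a nonzero vector in span{p,uᵢ} ∩ L (the image of uᵢ under the perspectivity from p onto L). Then u₁',u₂',u₃',u₄' are pairwise linearly independent and the cross ratios agree: b_m(u₁,u₂,u₃,u₄) = b_{m'}(u₁',u₂',u₃',u₄') for any m ∈ K³ ∖ D and m' ∈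 K³ ∖ L. That is, the perspectivity from a point preserves the cross ratio of four collinear points. -/
/-- `det3 m x y` is the determinant of the 3×3 matrix with columns `m, x, y`. -/
def det3 {K : Type*} [Field K] (m x y : Fin 3 → K) : K :=
  Matrix.det (Matrix.of ![m, x, y]).transpose

/-- The cross ratio (with respect to `m`) of four vectors of a plane `W ⊂ K³`,
computed via the brackets `[x,y]_m = det(m,x,y)`. -/
def crossRatioBracket {K : Type*} [Field K] (m u₁ u₂ u₃ u₄ : Fin 3 → K) : K :=
  (det3 m u₁ u₂ * det3 m u₃ u₄) / (det3 m u₁ u₄ * det3 m u₂ u₃)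

section helpers
variable {K : Type*} [Field K]

lemma det3_eq (m x y : Fin 3 → K) : det3 m x y = (Matrix.of ![m, x, y]).det :=
  Matrix.det_transpose _

lemma det3_expand (m x y : Fin 3 → K) :
    det3 m x y = m 0 * x 1 * y 2 - m 0 * x 2 * y 1 - m 1 * x 0 * y 2
      + m 1 * x 2 * y 0 + m 2 * x 0 * y 1 - m 2 * x 1 * y 0 := by
  rw [det3_eq, Matrix.det_fin_three]
  simp [Matrix.of_apply]

lemma det3_smul_add (t : K) (p w x y : Fin 3 → K) :
    det3 (t • p + w) x y = t * det3 p x y + det3 w x y := by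
  simp only [det3_expand, Pi.add_apply, Pi.smul_apply, smul_eq_mul]; ring

lemma det3_comb (a b c d : K) (p x y : Fin 3 → K) :
    det3 p (a • p + b • x) (c • p + d • y) = b * d * det3 p x y := by
  simp only [det3_expand, Pi.add_apply, Pi.smul_apply, smul_eq_mul]; ring
end helpers
section helpers2
variable {K : Type*} [Field K]

lemma psi_as_sum (ψ : (Fin 3 → K) →ₗ[K] K) (v : Fin 3 → K) :
    ψ v = ∑ j, v j * ψ (Pi.single j 1) := by
  conv_lhs => rw [LinearMap.pi_apply_eq_sum_univ]
  refine Finset.sum_congr rfl fun j _ => ?_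
  rw [smul_eq_mul]
  congr 1
  congr 1
  funext k
  simp [Pi.single_apply, eq_comm]

lemma det3_zero_of_ker (ψ : (Fin 3 → K) →ₗ[K] K) (p : Fin 3 → K) (hp : ψ p ≠ 0)
    (x y z : Fin 3 → K) (hx : ψ x = 0) (hy : ψ y = 0) (hz : ψ z = 0) :
    det3 x y z = 0 := by
  rw [det3_eq]
  rw [← Matrix.exists_mulVec_eq_zero_iff]
  refine ⟨fun j => ψ (Pi.single j 1), ?_, ?_⟩
  · intro hc
    apply hp
    rw [psi_as_sum]
    simp [funext_iff] at hc
    simp [hc]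
  · funext i
    simp only [Matrix.mulVec, dotProduct, Matrix.of_apply]
    fin_cases i
    · simpa [Matrix.cons_val_zero, ← psi_as_sum] using hx
    · simpa [← psi_as_sum] using hy
    · simpa [← psi_as_sum] using hz

lemma tri_indep (ψ : (Fin 3 → K) →ₗ[K] K) (p x y : Fin 3 → K) (hp : ψ p ≠ 0)
    (hx : ψ x = 0) (hy : ψ y = 0) (hxy : LinearIndependent K ![x, y])
    (a b c : K) (h : a • p + b • x + c • y = 0) : a = 0 ∧ b = 0 ∧ c = 0 := by
  have ha : a = 0 := by
    have := congrArg ψ h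
    simp [hx, hy, mul_comm] at this
    rcases this with h' | h'
    · exact h'
    · exact absurd h' hp
  subst ha
  simp only [zero_smul, zero_add] at h
  obtain ⟨hb, hc⟩ := LinearIndependent.pair_iff.mp hxy b c h
  exact ⟨rfl, hb, hc⟩

lemma det3_ne_zero (ψ : (Fin 3 → K) →ₗ[K] K) (p x y : Fin 3 → K) (hp : ψ p ≠ 0)
    (hx : ψ x = 0) (hy : ψ y = 0) (hxy : LinearIndependent K ![x, y]) :
    det3 p x y ≠ 0 := by
  intro hdet
  rw [det3_eq, ← Matrix.exists_vecMul_eq_zero_iff] at hdet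
  obtain ⟨v, hv0, hv⟩ := hdet
  have hcomb : v 0 • p + v 1 • x + v 2 • y = 0 := by
    funext j
    have := congrFun hv j
    simp only [Matrix.vecMul, dotProduct, Matrix.of_apply] at this
    simpa [Fin.sum_univ_three, mul_comm] using this
  obtain ⟨h0, h1, h2⟩ := tri_indep ψ p x y hp hx hy hxy _ _ _ hcomb
  apply hv0
  funext j; fin_cases j <;> assumption
end helpers2

theorem perspectivity_preserves_crossRatio' {K : Type*} [Field K]
    (ψD ψL : (Fin 3 → K) →ₗ[K] K) (hψD : ψD ≠ 0) (hψL : ψL ≠ 0)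
    (p : Fin 3 → K) (hpD : ψD p ≠ 0) (hpL : ψL p ≠ 0)
    (u : Fin 4 → (Fin 3 → K)) (hu : ∀ i, ψD (u i) = 0)
    (hind : ∀ i j, i ≠ j → LinearIndependent K ![u i, u j])
    (u' : Fin 4 → (Fin 3 → K)) (hu'0 : ∀ i, u' i ≠ 0)
    (hu'span : ∀ i, u' i ∈ Submodule.span K {p, u i})
    (hu'L : ∀ i, ψL (u' i) = 0) :
    (∀ i j, i ≠ j → LinearIndependent K ![u' i, u' j]) ∧
    (∀ m m' : Fin 3 → K, ψD m ≠ 0 → ψL m' ≠ 0 →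
      (det3 m (u 0) (u 1) * det3 m (u 2) (u 3)) / (det3 m (u 0) (u 3) * det3 m (u 1) (u 2)) =
        (det3 m' (u' 0) (u' 1) * det3 m' (u' 2) (u' 3)) /
          (det3 m' (u' 0) (u' 3) * det3 m' (u' 1) (u' 2))) := by
  choose a b hab using fun i => Submodule.mem_span_pair.mp (hu'span i)
  have hb : ∀ i, b i ≠ 0 := by
    intro i h
    have h1 : u' i = a i • p := by rw [← hab i, h, zero_smul, add_zero]
    have h2 : a i * ψL p = 0 := by
      have := hu'L i
      rw [h1] at this
      simpa using this
    rcases mul_eq_zero.mp h2 with h' | h'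
    · exact hu'0 i (by rw [h1, h', zero_smul])
    · exact hpL h'
  have hd : ∀ i j, i ≠ j → det3 p (u i) (u j) ≠ 0 := fun i j hij =>
    det3_ne_zero ψD p (u i) (u j) hpD (hu i) (hu j) (hind i j hij)
  have hdet' : ∀ i j, det3 p (u' i) (u' j) = b i * b j * det3 p (u i) (u j) := by
    intro i j
    rw [← hab i, ← hab j, det3_comb]
  have indep : ∀ i j, i ≠ j → LinearIndependent K ![u' i, u' j] := by
    intro i j hij
    rw [LinearIndependent.pair_iff]
    intro s t hst
    rw [← hab i, ← hab j] at hst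
    have hcomb : (s * a i + t * a j) • p + (s * b i) • u i + (t * b j) • u j = 0 := by
      rw [← hst]; module
    obtain ⟨_, h1, h2⟩ :=
      tri_indep ψD p (u i) (u j) hpD (hu i) (hu j) (hind i j hij) _ _ _ hcomb
    exact ⟨(mul_eq_zero.mp h1).resolve_right (hb i),
           (mul_eq_zero.mp h2).resolve_right (hb j)⟩
  refine ⟨indep, ?_⟩
  intro m m' hm hm'
  set t := ψD m / ψD p with ht
  set s := ψL m' / ψL p with hs
  have htne : t ≠ 0 := div_ne_zero hm hpD
  have hsne : s ≠ 0 := div_ne_zero hm' hpL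
  have hmD : ∀ x y, ψD x = 0 → ψD y = 0 → det3 m x y = t * det3 p x y := by
    intro x y hx hy
    have hker : ψD (m - t • p) = 0 := by
      simp [map_sub, map_smul, ht, div_mul_cancel₀ _ hpD]
    calc det3 m x y = det3 (t • p + (m - t • p)) x y := by
          congr 1; abel
      _ = t * det3 p x y + det3 (m - t • p) x y := det3_smul_add t p (m - t • p) x y
      _ = t * det3 p x y := by
          rw [det3_zero_of_ker ψD p hpD _ _ _ hker hx hy, add_zero]
  have hmL : ∀ x y, ψL x = 0 → ψL y = 0 → det3 m' x y = s * det3 p x y := by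
    intro x y hx hy
    have hker : ψL (m' - s • p) = 0 := by
      simp [map_sub, map_smul, hs, div_mul_cancel₀ _ hpL]
    calc det3 m' x y = det3 (s • p + (m' - s • p)) x y := by
          congr 1; abel
      _ = s * det3 p x y + det3 (m' - s • p) x y := det3_smul_add s p (m' - s • p) x y
      _ = s * det3 p x y := by
          rw [det3_zero_of_ker ψL p hpL _ _ _ hker hx hy, add_zero]
  rw [hmD _ _ (hu 0) (hu 1), hmD _ _ (hu 2) (hu 3), hmD _ _ (hu 0) (hu 3),
      hmD _ _ (hu 1) (hu 2), hmL _ _ (hu'L 0) (hu'L 1), hmL _ _ (hu'L 2) (hu'L 3),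
      hmL _ _ (hu'L 0) (hu'L 3), hmL _ _ (hu'L 1) (hu'L 2),
      hdet' 0 1, hdet' 2 3, hdet' 0 3, hdet' 1 2]
  have h03 := hd 0 3 (by decide)
  have h12 := hd 1 2 (by decide)
  rw [div_eq_div_iff
    (mul_ne_zero (mul_ne_zero htne h03) (mul_ne_zero htne h12))
    (mul_ne_zero (mul_ne_zero hsne (mul_ne_zero (mul_ne_zero (hb 0) (hb 3)) h03))
      (mul_ne_zero hsne (mul_ne_zero (mul_ne_zero (hb 1) (hb 2)) h12)))]
  ring


/-- The perspectivity from a point `p` of the line `D = ker ψD` onto the line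
`L = ker ψL` (where `p` lies on neither line), sending `uᵢ` to
`uᵢ' ∈ span{p,uᵢ} ∩ L`, preserves the cross ratio of four collinear points. -/
theorem perspectivity_preserves_crossRatio {K : Type*} [Field K]
    (ψD ψL : (Fin 3 → K) →ₗ[K] K) (hψD : ψD ≠ 0) (hψL : ψL ≠ 0)
    (p : Fin 3 → K) (hpD : ψD p ≠ 0) (hpL : ψL p ≠ 0)
    (u : Fin 4 → (Fin 3 → K)) (hu : ∀ i, ψD (u i) = 0)
    (hind : ∀ i j, i ≠ j → LinearIndependent K ![u i, u j])
    (u' : Fin 4 → (Fin 3 → K)) (hu'0 : ∀ i, u' i ≠ 0)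
    (hu'span : ∀ i, u' i ∈ Submodule.span K {p, u i})
    (hu'L : ∀ i, ψL (u' i) = 0) :
    (∀ i j, i ≠ j → LinearIndependent K ![u' i, u' j]) ∧
    (∀ m m' : Fin 3 → K, ψD m ≠ 0 → ψL m' ≠ 0 →
      crossRatioBracket m (u 0) (u 1) (u 2) (u 3) =
        crossRatioBracket m' (u' 0) (u' 1) (u' 2) (u' 3)) := by
  simp only [crossRatioBracket]
  exact perspectivity_preserves_crossRatio' ψD ψL hψD hψL p hpD hpL u hu hind u' hu'0 hu'span hu'L
end

section
/- Let K be a field and let (p₁,φ₁), (p₂,φ₂), (p₃,φ₃) be a generic triple of flags of P(K³). Let q be a nonzero vector with φ₂(q) = φ₃(q) = 0, let u₁ be a nonzero vector with φ₁(u₁) = φ₂(u₁) = 0, let u₂ = p₂, let u₃ = q, and let u₄ be a nonzero vector in span{p₁,p₃} ∩ ker φ₂. Then u₁,u₂,u₃,u₄ are pairwise linearly independent vectors of the 2-dimensional subspace ker φ₂, and for any m ∈ K³ with φ₂(m) ≠ 0, the cross ratio b_m(u₁,u₂,u₃,u₄) equals the triple ratio: ([u₁,u₂]_m[u₃,u₄]_m)/([u₁,u₄]_m[u₂,u₃]_m)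 = Tri(F₁,F₂,F₃). (This expresses the triple ratio as the cross ratio Bir(D₁, p₁p₂, p₁p₂₃, p₁p₃) of the four lines through p₁, read on the transversal line D₂.) -/
section Determinant

variable {K : Type*} [Field K]

lemma det3_eq_s18 (a b c : Fin 3 → K) :
    det3 a b c = a 0 * b 1 * c 2 - a 0 * b 2 * c 1 - a 1 * b 0 * c 2
      + a 1 * b 2 * c 0 + a 2 * b 0 * c 1 - a 2 * b 1 * c 0 := by
  simp [det3, Matrix.det_fin_three]

lemma det3_smul_sub_smul_left (a b : K) (m n x y : Fin 3 → K) :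
    det3 (a • m - b • n) x y = a * det3 m x y - b * det3 n x y := by
  simp only [det3_eq_s18, Pi.sub_apply, Pi.smul_apply, smul_eq_mul]
  ring

lemma det3_smul_add_smul_add_smul (p₁ p₂ p₃ : Fin 3 → K) (a b c d e f : K) :
    det3 p₁ (a • p₁ + b • p₂ + c • p₃) (d • p₁ + e • p₂ + f • p₃) =
      (b * f - c * e) * det3 p₁ p₂ p₃ := by
  simp only [det3_eq_s18, Pi.add_apply, Pi.smul_apply, smul_eq_mul]
  ring

lemma linearIndependent_iff_det3_ne_zero {m x y : Fin 3 → K} :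
    LinearIndependent K ![m, x, y] ↔ det3 m x y ≠ 0 := by
  rw [det3, Matrix.det_transpose, ← isUnit_iff_ne_zero, ← Matrix.isUnit_iff_isUnit_det]
  exact Matrix.linearIndependent_rows_iff_isUnit

lemma det3_eq_zero_of_apply_eq_zero {φ : (Fin 3 → K) →ₗ[K] K} (hφ : φ ≠ 0) {m x y : Fin 3 → K}
    (hm : φ m = 0) (hx : φ x = 0) (hy : φ y = 0) : det3 m x y = 0 := by
  by_contra h
  have hspan := (linearIndependent_iff_det3_ne_zero.mpr h).span_eq_top_of_card_eq_finrank
    (by simp)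
  refine hφ (LinearMap.ker_eq_top.mp (top_unique ?_))
  rw [← hspan, Submodule.span_le]
  rintro _ ⟨i, rfl⟩
  fin_cases i <;> assumption

lemma det3_mul_apply_eq {φ : (Fin 3 → K) →ₗ[K] K} {n x y : Fin 3 → K} (hn : φ n ≠ 0)
    (hx : φ x = 0) (hy : φ y = 0) (m : Fin 3 → K) : det3 m x y * φ n = φ m * det3 n x y := by
  have hφ : φ ≠ 0 := fun h => hn (by rw [h, LinearMap.zero_apply])
  have := det3_eq_zero_of_apply_eq_zero hφ (m := φ n • m - φ m • n)
    (by rw [map_sub, map_smul, map_smul, smul_eq_mul, smul_eq_mul, mul_comm, sub_self]) hx hy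
  rw [det3_smul_sub_smul_left] at this
  linear_combination this

lemma crossRatioBracket_eq_of_apply_eq_zero {φ : (Fin 3 → K) →ₗ[K] K}
    {m n u₁ u₂ u₃ u₄ : Fin 3 → K} (hm : φ m ≠ 0) (hn : φ n ≠ 0)
    (h₁ : φ u₁ = 0) (h₂ : φ u₂ = 0) (h₃ : φ u₃ = 0) (h₄ : φ u₄ = 0) :
    crossRatioBracket m u₁ u₂ u₃ u₄ = crossRatioBracket n u₁ u₂ u₃ u₄ := by
  have hscale : ∀ {x y}, φ x = 0 → φ y = 0 → det3 m x y = φ m / φ n * det3 n x y :=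
    fun hx hy => by rw [div_mul_eq_mul_div, eq_div_iff hn, det3_mul_apply_eq hn hx hy]
  have hc : φ m / φ n * (φ m / φ n) ≠ 0 := by positivity
  rw [crossRatioBracket, crossRatioBracket, hscale h₁ h₂, hscale h₃ h₄, hscale h₁ h₄, hscale h₂ h₃,
    mul_mul_mul_comm _ (det3 n u₁ u₂), mul_mul_mul_comm _ (det3 n u₁ u₄)]
  exact mul_div_mul_left _ _ hc

lemma crossRatioBracket_smul_add_smul_add_smul {p₁ p₂ p₃ : Fin 3 → K}
    (hp : det3 p₁ p₂ p₃ ≠ 0) (a b c d e f g : K) {h : K} (hh : h ≠ 0) :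
    crossRatioBracket p₁ (a • p₁ + b • p₂ + c • p₃) p₂ (d • p₁ + e • p₂ + f • p₃)
      (g • p₁ + h • p₃) = -(c * e) / (b * f) := by
  have B₁₂ : det3 p₁ (a • p₁ + b • p₂ + c • p₃) p₂ = -c * det3 p₁ p₂ p₃ := by
    simpa using det3_smul_add_smul_add_smul p₁ p₂ p₃ a b c 0 1 0
  have B₃₄ : det3 p₁ (d • p₁ + e • p₂ + f • p₃) (g • p₁ + h • p₃) = e * h * det3 p₁ p₂ p₃ := by
    simpa using det3_smul_add_smul_add_smul p₁ p₂ p₃ d e f g 0 h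
  have B₁₄ : det3 p₁ (a • p₁ + b • p₂ + c • p₃) (g • p₁ + h • p₃) = b * h * det3 p₁ p₂ p₃ := by
    simpa using det3_smul_add_smul_add_smul p₁ p₂ p₃ a b c g 0 h
  have B₂₃ : det3 p₁ p₂ (d • p₁ + e • p₂ + f • p₃) = f * det3 p₁ p₂ p₃ := by
    simpa using det3_smul_add_smul_add_smul p₁ p₂ p₃ 0 1 0 d e f
  rw [crossRatioBracket, B₁₂, B₃₄, B₁₄, B₂₃]
  have hD : h * det3 p₁ p₂ p₃ ^ 2 ≠ 0 := by positivity
  calc _ = -(c * e) * (h * det3 p₁ p₂ p₃ ^ 2) / (b * f * (h * det3 p₁ p₂ p₃ ^ 2)) := by ring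
    _ = _ := mul_div_mul_right _ _ hD

end Determinant

section LinearAlgebra

variable {K V : Type*} [Field K] [AddCommGroup V] [Module K V]

lemma eq_zero_of_linearIndependent_dual [FiniteDimensional K V] {ι : Type*} [Fintype ι]
    {φ : ι → Module.Dual K V} (hφ : LinearIndependent K φ)
    (hcard : Fintype.card ι = Module.finrank K V) {v : V} (hv : ∀ i, φ i v = 0) : v = 0 := by
  have hspan := hφ.span_eq_top_of_card_eq_finrank' (hcard.trans Subspace.dual_finrank_eq.symm)
  have hker : Submodule.span K (Set.range φ) ≤ LinearMap.ker (Module.Dual.eval K V v) :=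
    Submodule.span_le.mpr (Set.range_subset_iff.mpr hv)
  exact (Module.forall_dual_apply_eq_zero_iff K v).mp fun ψ => hker (hspan ▸ Submodule.mem_top)

lemma exists_eq_smul_add_smul_add_smul {p₁ p₂ p₃ : V}
    (hp : Submodule.span K (Set.range ![p₁, p₂, p₃]) = ⊤) (v : V) :
    ∃ a b c : K, v = a • p₁ + b • p₂ + c • p₃ := by
  have hv : v ∈ Submodule.span K (Set.range ![p₁, p₂, p₃]) := hp ▸ Submodule.mem_top
  obtain ⟨c, hc⟩ := (Submodule.mem_span_range_iff_exists_fun K).mp hv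
  exact ⟨c 0, c 1, c 2, by rw [← hc, Fin.sum_univ_three]; rfl⟩

lemma linearIndependent_pair_of_apply_eq_zero {φ : V →ₗ[K] K} {x y : V} (hx : x ≠ 0)
    (hφx : φ x = 0) (hφy : φ y ≠ 0) : LinearIndependent K ![x, y] :=
  (LinearIndependent.pair_iff' hx).mpr fun a h => hφy (by rw [← h, map_smul, hφx, smul_zero])

lemma linearIndependent_pair_of_notMem_of_mem {W : Submodule K V} {x y : V} (hx : x ∉ W)
    (hy : y ∈ W) (hy₀ : y ≠ 0) : LinearIndependent K ![x, y] :=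
  LinearIndependent.pair_symm_iff.mp <|
    (LinearIndependent.pair_iff' hy₀).mpr fun a h => hx (h ▸ W.smul_mem a hy)

lemma eq_zero_iff_of_mul_add_mul_eq_zero {a b α β : K} (hα : α ≠ 0) (hβ : β ≠ 0)
    (h : a * α + b * β = 0) : a = 0 ↔ b = 0 := by
  constructor <;> rintro rfl
  · simpa [hβ] using h
  · simpa [hα] using h

/-- A point on both lines `ker φ` and `ker ψ` lies on no side of the triangle `x y z`. -/
lemma coeffs_ne_zero_of_apply_eq_zero {φ ψ : V →ₗ[K] K} {x y z : V} {a b c : K}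
    (hv : a • x + b • y + c • z ≠ 0) (hφv : φ (a • x + b • y + c • z) = 0)
    (hψv : ψ (a • x + b • y + c • z) = 0) (hφx : φ x = 0) (hψy : ψ y = 0)
    (hφy : φ y ≠ 0) (hφz : φ z ≠ 0) (hψx : ψ x ≠ 0) (hψz : ψ z ≠ 0) :
    a ≠ 0 ∧ b ≠ 0 ∧ c ≠ 0 := by
  have hbc := eq_zero_iff_of_mul_add_mul_eq_zero hφy hφz (by simpa [hφx] using hφv)
  have hac := eq_zero_iff_of_mul_add_mul_eq_zero hψx hψz (by simpa [hψy] using hψv)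
  have hc : c ≠ 0 := fun hc => hv (by rw [hac.mpr hc, hbc.mpr hc, hc]; simp)
  exact ⟨hac.not.mpr hc, hbc.not.mpr hc, hc⟩

lemma apply_ne_zero_of_mem_span_pair {φ ψ : V →ₗ[K] K} {x z v : V}
    (hv : v ∈ Submodule.span K {x, z}) (hv₀ : v ≠ 0) (hψv : ψ v = 0) (hψx : ψ x ≠ 0)
    (hφx : φ x = 0) (hφz : φ z ≠ 0) : φ v ≠ 0 := by
  obtain ⟨g, h, rfl⟩ := Submodule.mem_span_pair.mp hv
  intro hφv
  have hh : h = 0 := by simpa [hφx, hφz] using hφv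
  have hg : g = 0 := by simpa [hh, hψx] using hψv
  simp [hg, hh] at hv₀

end LinearAlgebra

lemma crossRatioBracket_first_point_eq_tri {K : Type*} [Field K]
    {p₁ p₂ p₃ : Fin 3 → K} {φ₁ φ₂ φ₃ : (Fin 3 → K) →ₗ[K] K}
    (hf₁ : φ₁ p₁ = 0) (hf₂ : φ₂ p₂ = 0) (hf₃ : φ₃ p₃ = 0)
    (h12 : φ₁ p₂ ≠ 0) (h13 : φ₁ p₃ ≠ 0) (h21 : φ₂ p₁ ≠ 0)
    (h23 : φ₂ p₃ ≠ 0) (h31 : φ₃ p₁ ≠ 0) (h32 : φ₃ p₂ ≠ 0)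
    (hgenp : LinearIndependent K ![p₁, p₂, p₃])
    {q u₁ u₄ : Fin 3 → K} (hq : q ≠ 0) (hq2 : φ₂ q = 0) (hq3 : φ₃ q = 0)
    (hu₁ : u₁ ≠ 0) (hu₁1 : φ₁ u₁ = 0) (hu₁2 : φ₂ u₁ = 0)
    (hu₄span : u₄ ∈ Submodule.span K {p₁, p₃}) (hφ₁u₄ : φ₁ u₄ ≠ 0) :
    crossRatioBracket p₁ u₁ p₂ q u₄ = Tri p₁ p₂ p₃ φ₁ φ₂ φ₃ := by
  have hspan := hgenp.span_eq_top_of_card_eq_finrank' (by simp)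
  obtain ⟨a, b, c, rfl⟩ := exists_eq_smul_add_smul_add_smul hspan u₁
  obtain ⟨d, e, f, rfl⟩ := exists_eq_smul_add_smul_add_smul hspan q
  obtain ⟨g, h, rfl⟩ := Submodule.mem_span_pair.mp hu₄span
  obtain ⟨-, hb, -⟩ :=
    coeffs_ne_zero_of_apply_eq_zero hu₁ hu₁1 hu₁2 hf₁ hf₂ h12 h13 h21 h23
  obtain ⟨-, hf, -⟩ := coeffs_ne_zero_of_apply_eq_zero (a := e) (b := f) (c := d)
    (by rwa [← add_rotate]) (by rwa [← add_rotate]) (by rwa [← add_rotate]) hf₂ hf₃ h23 h21 h32 h31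
  have hh : h ≠ 0 := fun hh => hφ₁u₄ (by simp [hh, hf₁])
  have E₁ : b * φ₁ p₂ + c * φ₁ p₃ = 0 := by simpa [hf₁] using hu₁1
  have E₃ : d * φ₂ p₁ + f * φ₂ p₃ = 0 := by simpa [hf₂] using hq2
  have E₄ : d * φ₃ p₁ + e * φ₃ p₂ = 0 := by simpa [hf₃] using hq3
  rw [crossRatioBracket_smul_add_smul_add_smul (linearIndependent_iff_det3_ne_zero.mp hgenp)
    a b c d e f g hh, Tri, div_eq_div_iff (by positivity) (by positivity)]
  linear_combination -(f * φ₂ p₃ * φ₃ p₁) * E₁ + c * φ₁ p₃ * (φ₃ p₁ * E₃ - φ₂ p₁ * E₄)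

theorem tri_as_crossRatio_general {K : Type*} [Field K]
    (p₁ p₂ p₃ : Fin 3 → K) (φ₁ φ₂ φ₃ : (Fin 3 → K) →ₗ[K] K)
    (hf₁ : φ₁ p₁ = 0) (hf₂ : φ₂ p₂ = 0) (hf₃ : φ₃ p₃ = 0)
    (h12 : φ₁ p₂ ≠ 0) (h13 : φ₁ p₃ ≠ 0) (h21 : φ₂ p₁ ≠ 0)
    (h23 : φ₂ p₃ ≠ 0) (h31 : φ₃ p₁ ≠ 0) (h32 : φ₃ p₂ ≠ 0)
    (hgenp : LinearIndependent K ![p₁, p₂, p₃])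
    (hgenφ : LinearIndependent K ![φ₁, φ₂, φ₃])
    (q : Fin 3 → K) (hq : q ≠ 0) (hq2 : φ₂ q = 0) (hq3 : φ₃ q = 0)
    (u₁ : Fin 3 → K) (hu₁ : u₁ ≠ 0) (hu₁1 : φ₁ u₁ = 0) (hu₁2 : φ₂ u₁ = 0)
    (u₄ : Fin 3 → K) (hu₄ : u₄ ≠ 0) (hu₄span : u₄ ∈ Submodule.span K {p₁, p₃})
    (hu₄2 : φ₂ u₄ = 0) :
    LinearIndependent K ![u₁, p₂] ∧ LinearIndependent K ![u₁, q] ∧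
    LinearIndependent K ![u₁, u₄] ∧ LinearIndependent K ![p₂, q] ∧
    LinearIndependent K ![p₂, u₄] ∧ LinearIndependent K ![q, u₄] ∧
    (∀ m : Fin 3 → K, φ₂ m ≠ 0 →
      crossRatioBracket m u₁ p₂ q u₄ = Tri p₁ p₂ p₃ φ₁ φ₂ φ₃) := by
  have hφ₁q : φ₁ q ≠ 0 := fun h => hq <| eq_zero_of_linearIndependent_dual hgenφ (by simp)
    fun i => by fin_cases i <;> assumption
  have hφ₁u₄ : φ₁ u₄ ≠ 0 := apply_ne_zero_of_mem_span_pair hu₄span hu₄ hu₄2 h21 hf₁ h13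
  have hφ₃u₄ : φ₃ u₄ ≠ 0 := apply_ne_zero_of_mem_span_pair (by rwa [Set.pair_comm]) hu₄ hu₄2
    h23 hf₃ h31
  have hp₂ : p₂ ∉ Submodule.span K {p₁, p₃} := by
    simpa [Set.image_insert_eq] using hgenp.notMem_span_image (s := {0, 2}) (x := 1) (by decide)
  refine ⟨linearIndependent_pair_of_apply_eq_zero hu₁ hu₁1 h12,
    linearIndependent_pair_of_apply_eq_zero hu₁ hu₁1 hφ₁q,
    linearIndependent_pair_of_apply_eq_zero hu₁ hu₁1 hφ₁u₄,
    LinearIndependent.pair_symm_iff.mp (linearIndependent_pair_of_apply_eq_zero hq hq3 h32),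
    linearIndependent_pair_of_notMem_of_mem hp₂ hu₄span hu₄,
    linearIndependent_pair_of_apply_eq_zero hq hq3 hφ₃u₄, fun m hm => ?_⟩
  rw [crossRatioBracket_eq_of_apply_eq_zero hm h21 hu₁2 hf₂ hq2 hu₄2]
  exact crossRatioBracket_first_point_eq_tri hf₁ hf₂ hf₃ h12 h13 h21 h23 h31 h32 hgenp
    hq hq2 hq3 hu₁ hu₁1 hu₁2 hu₄span hφ₁u₄

/-- The triple ratio of a generic triple of flags equals the cross ratio
`Bir(D₁, p₁p₂, p₁p₂₃, p₁p₃)` of the four lines through `p₁`, read on the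
transversal line `D₂ = ker φ₂`: here `u₁ ∈ D₁ ∩ D₂`, `u₂ = p₂`,
`u₃ = q ∈ D₂ ∩ D₃` and `u₄ ∈ (p₁p₃) ∩ D₂`. -/
theorem tri_as_crossRatio {K : Type*} [Field K]
    (p₁ p₂ p₃ : Fin 3 → K) (φ₁ φ₂ φ₃ : (Fin 3 → K) →ₗ[K] K)
    (hp₁ : p₁ ≠ 0) (hp₂ : p₂ ≠ 0) (hp₃ : p₃ ≠ 0)
    (hφ₁ : φ₁ ≠ 0) (hφ₂ : φ₂ ≠ 0) (hφ₃ : φ₃ ≠ 0)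
    (hf₁ : φ₁ p₁ = 0) (hf₂ : φ₂ p₂ = 0) (hf₃ : φ₃ p₃ = 0)
    (h12 : φ₁ p₂ ≠ 0) (h13 : φ₁ p₃ ≠ 0) (h21 : φ₂ p₁ ≠ 0)
    (h23 : φ₂ p₃ ≠ 0) (h31 : φ₃ p₁ ≠ 0) (h32 : φ₃ p₂ ≠ 0)
    (hgenp : LinearIndependent K ![p₁, p₂, p₃])
    (hgenφ : LinearIndependent K ![φ₁, φ₂, φ₃])
    (q : Fin 3 → K) (hq : q ≠ 0) (hq2 : φ₂ q = 0) (hq3 : φ₃ q = 0)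
    (u₁ : Fin 3 → K) (hu₁ : u₁ ≠ 0) (hu₁1 : φ₁ u₁ = 0) (hu₁2 : φ₂ u₁ = 0)
    (u₄ : Fin 3 → K) (hu₄ : u₄ ≠ 0) (hu₄span : u₄ ∈ Submodule.span K {p₁, p₃})
    (hu₄2 : φ₂ u₄ = 0) :
    LinearIndependent K ![u₁, p₂] ∧ LinearIndependent K ![u₁, q] ∧
    LinearIndependent K ![u₁, u₄] ∧ LinearIndependent K ![p₂, q] ∧
    LinearIndependent K ![p₂, u₄] ∧ LinearIndependent K ![q, u₄] ∧
    (∀ m : Fin 3 → K, φ₂ m ≠ 0 →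
      crossRatioBracket m u₁ p₂ q u₄ = Tri p₁ p₂ p₃ φ₁ φ₂ φ₃) :=
  tri_as_crossRatio_general p₁ p₂ p₃ φ₁ φ₂ φ₃ hf₁ hf₂ hf₃ h12 h13 h21 h23 h31 h32 hgenp hgenφ q hq
    hq2 hq3 u₁ hu₁ hu₁1 hu₁2 u₄ hu₄ hu₄span hu₄2
end

section
/- Let K be a field and let (p₁,φ₁), (p₂,φ₂), (p₃,φ₃) be a generic triple of flags of P(K³). Let v₁ = p₁, let v₂ be a nonzero vector with φ₁(v₂) = φ₂(v₂) = 0, let v₃ be a nonzero vector in ker φ₁ ∩ span{p₂,p₃}, and let v₄ be a nonzero vector with φ₁(v₄) = φ₃(v₄) = 0. Then v₁,v₂,v₃,v₄ are pairwise linearly independent vectors of the 2-dimensional subspace ker φ₁, and for any m ∈ K³ with φ₁(m) ≠ 0, the cross ratio of these four points on the line D₁ equals the inverse of the triple ratio: ([v₁,v₂]_m[v₃,v₄]_m)/([v₁,v₄]_m[v₂,v₃]_m) = Tri(F₁,F₂,F₃)⁻¹ = Tri(F₃,F₂,F₁). (This is the dual expression of the triple ratio as the cross ratio Bir(p₁,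 D₂∩D₁, D₂₃∩D₁, D₃∩D₁) of four points on the line D₁.) -/
/-- coefficient matrix of three linear forms on `K³`. -/
def phiMat {K : Type*} [Field K] (φ₁ φ₂ φ₃ : (Fin 3 → K) →ₗ[K] K) :
    Matrix (Fin 3) (Fin 3) K :=
  Matrix.of ![fun j => φ₁ fun k => if j = k then 1 else 0,
              fun j => φ₂ fun k => if j = k then 1 else 0,
              fun j => φ₃ fun k => if j = k then 1 else 0]

lemma phi_apply {K : Type*} [Field K] (φ : (Fin 3 → K) →ₗ[K] K) (x : Fin 3 → K) :
    φ x = x 0 * φ (fun k => if 0 = k then 1 else 0) + x 1 * φ (fun k => if 1 = k then 1 else 0)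
      + x 2 * φ (fun k => if 2 = k then 1 else 0) := by
  rw [LinearMap.pi_apply_eq_sum_univ φ x, Fin.sum_univ_three]
  simp [smul_eq_mul]

set_option maxHeartbeats 1000000 in
lemma phiMat_mul {K : Type*} [Field K] (φ₁ φ₂ φ₃ : (Fin 3 → K) →ₗ[K] K)
    (m x y : Fin 3 → K) :
    phiMat φ₁ φ₂ φ₃ * (Matrix.of ![m, x, y]).transpose =
      Matrix.of ![![φ₁ m, φ₁ x, φ₁ y], ![φ₂ m, φ₂ x, φ₂ y], ![φ₃ m, φ₃ x, φ₃ y]] := by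
  ext i j
  fin_cases i <;> fin_cases j <;>
    simp [phiMat, Matrix.mul_apply, Fin.sum_univ_three, Matrix.transpose_apply,
      Matrix.vecHead, Matrix.vecTail,
      LinearMap.pi_apply_eq_sum_univ _ m, LinearMap.pi_apply_eq_sum_univ _ x,
      LinearMap.pi_apply_eq_sum_univ _ y, mul_comm]

lemma phiMat_det_mul_det3 {K : Type*} [Field K] (φ₁ φ₂ φ₃ : (Fin 3 → K) →ₗ[K] K)
    (m x y : Fin 3 → K) (hx : φ₁ x = 0) (hy : φ₁ y = 0) :
    (phiMat φ₁ φ₂ φ₃).det * det3 m x y =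
      φ₁ m * (φ₂ x * φ₃ y - φ₃ x * φ₂ y) := by
  rw [det3, ← Matrix.det_mul, phiMat_mul, Matrix.det_fin_three]
  simp [hx, hy]
  ring

lemma phiMat_det_ne_zero {K : Type*} [Field K] {φ₁ φ₂ φ₃ : (Fin 3 → K) →ₗ[K] K}
    (hgenφ : LinearIndependent K ![φ₁, φ₂, φ₃]) : (phiMat φ₁ φ₂ φ₃).det ≠ 0 := by
  intro hdet
  obtain ⟨c, hc0, hcA⟩ := Matrix.exists_vecMul_eq_zero_iff.mpr hdet
  have hj : ∀ j, c 0 * phiMat φ₁ φ₂ φ₃ 0 j + c 1 * phiMat φ₁ φ₂ φ₃ 1 j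
      + c 2 * phiMat φ₁ φ₂ φ₃ 2 j = 0 := by
    intro j
    have := congrFun hcA j
    simpa [Matrix.vecMul, dotProduct, Fin.sum_univ_three] using this
  have hrel : c 0 • φ₁ + c 1 • φ₂ + c 2 • φ₃ = 0 := by
    apply LinearMap.ext
    intro x
    have h0 := hj 0
    have h1 := hj 1
    have h2 := hj 2
    simp only [phiMat, Matrix.of_apply, Matrix.cons_val_zero, Matrix.cons_val_one,
      Matrix.head_cons, Matrix.cons_val_two, Matrix.tail_cons] at h0 h1 h2
    simp only [LinearMap.add_apply, LinearMap.smul_apply, smul_eq_mul, LinearMap.zero_apply,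
      phi_apply φ₁ x, phi_apply φ₂ x, phi_apply φ₃ x]
    linear_combination x 0 * h0 + x 1 * h1 + x 2 * h2
  have := Fintype.linearIndependent_iff.mp hgenφ c (by
    simpa [Fin.sum_univ_three] using hrel)
  exact hc0 (funext fun i => by fin_cases i <;> simp [this])

lemma eq_zero_of_forms {K : Type*} [Field K] {φ₁ φ₂ φ₃ : (Fin 3 → K) →ₗ[K] K}
    (hgenφ : LinearIndependent K ![φ₁, φ₂, φ₃]) {v : Fin 3 → K}
    (h1 : φ₁ v = 0) (h2 : φ₂ v = 0) (h3 : φ₃ v = 0) : v = 0 := by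
  apply Matrix.eq_zero_of_mulVec_eq_zero (phiMat_det_ne_zero hgenφ)
  funext i
  have e1 := h1; have e2 := h2; have e3 := h3
  rw [phi_apply] at e1 e2 e3
  fin_cases i <;>
    simp [phiMat, Matrix.mulVec, dotProduct, Fin.sum_univ_three] <;>
    [linear_combination e1; linear_combination e2; linear_combination e3]

/-- Dual expression of the triple ratio: the cross ratio
`Bir(p₁, D₂∩D₁, D₂₃∩D₁, D₃∩D₁)` of four points on the line `D₁ = ker φ₁`
equals the inverse of the triple ratio, i.e. the triple ratio of the reversed
triple of flags. Here `v₁ = p₁`, `v₂ ∈ D₁ ∩ D₂`, `v₃ ∈ D₁ ∩ (p₂p₃)` and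
`v₄ ∈ D₁ ∩ D₃`. -/
theorem tri_dual_crossRatio {K : Type*} [Field K]
    (p₁ p₂ p₃ : Fin 3 → K) (φ₁ φ₂ φ₃ : (Fin 3 → K) →ₗ[K] K)
    (hp₁ : p₁ ≠ 0) (hp₂ : p₂ ≠ 0) (hp₃ : p₃ ≠ 0)
    (hφ₁ : φ₁ ≠ 0) (hφ₂ : φ₂ ≠ 0) (hφ₃ : φ₃ ≠ 0)
    (hf₁ : φ₁ p₁ = 0) (hf₂ : φ₂ p₂ = 0) (hf₃ : φ₃ p₃ = 0)
    (h12 : φ₁ p₂ ≠ 0) (h13 : φ₁ p₃ ≠ 0) (h21 : φ₂ p₁ ≠ 0)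
    (h23 : φ₂ p₃ ≠ 0) (h31 : φ₃ p₁ ≠ 0) (h32 : φ₃ p₂ ≠ 0)
    (hgenp : LinearIndependent K ![p₁, p₂, p₃])
    (hgenφ : LinearIndependent K ![φ₁, φ₂, φ₃])
    (v₂ : Fin 3 → K) (hv₂ : v₂ ≠ 0) (hv₂1 : φ₁ v₂ = 0) (hv₂2 : φ₂ v₂ = 0)
    (v₃ : Fin 3 → K) (hv₃ : v₃ ≠ 0) (hv₃1 : φ₁ v₃ = 0)
    (hv₃span : v₃ ∈ Submodule.span K {p₂, p₃})
    (v₄ : Fin 3 → K) (hv₄ : v₄ ≠ 0) (hv₄1 : φ₁ v₄ = 0) (hv₄3 : φ₃ v₄ = 0) :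
    LinearIndependent K ![p₁, v₂] ∧ LinearIndependent K ![p₁, v₃] ∧
    LinearIndependent K ![p₁, v₄] ∧ LinearIndependent K ![v₂, v₃] ∧
    LinearIndependent K ![v₂, v₄] ∧ LinearIndependent K ![v₃, v₄] ∧
    (∀ m : Fin 3 → K, φ₁ m ≠ 0 →
      crossRatioBracket m p₁ v₂ v₃ v₄ = (Tri p₁ p₂ p₃ φ₁ φ₂ φ₃)⁻¹ ∧
      crossRatioBracket m p₁ v₂ v₃ v₄ = Tri p₃ p₂ p₁ φ₃ φ₂ φ₁) := by
  obtain ⟨α, β, hαβ⟩ := Submodule.mem_span_pair.mp hv₃span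
  -- basic scalar identities
  have e1 : α * φ₁ p₂ + β * φ₁ p₃ = 0 := by
    have := hv₃1
    rw [← hαβ, map_add, map_smul, map_smul, smul_eq_mul, smul_eq_mul] at this
    exact this
  have hv₃2 : φ₂ v₃ = β * φ₂ p₃ := by
    rw [← hαβ, map_add, map_smul, map_smul, smul_eq_mul, smul_eq_mul, hf₂]
    ring
  have hv₃3 : φ₃ v₃ = α * φ₃ p₂ := by
    rw [← hαβ, map_add, map_smul, map_smul, smul_eq_mul, smul_eq_mul, hf₃]
    ring
  have hβ : β ≠ 0 := by
    intro h
    have hα0 : α = 0 := by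
      have : α * φ₁ p₂ = 0 := by linear_combination e1 - φ₁ p₃ * h
      exact (mul_eq_zero.mp this).resolve_right h12
    exact hv₃ (by rw [← hαβ, hα0, h]; simp)
  have hα : α ≠ 0 := by
    intro h
    have hβ0 : β = 0 := by
      have : β * φ₁ p₃ = 0 := by linear_combination e1 - φ₁ p₂ * h
      exact (mul_eq_zero.mp this).resolve_right h13
    exact hβ hβ0
  have ht : φ₃ v₂ ≠ 0 := fun h => hv₂ (eq_zero_of_forms hgenφ hv₂1 hv₂2 h)
  have hs : φ₂ v₄ ≠ 0 := fun h => hv₄ (eq_zero_of_forms hgenφ hv₄1 h hv₄3)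
  -- linear independences
  refine ⟨?_, ?_, ?_, ?_, ?_, ?_, ?_⟩
  · refine linearIndependent_fin2.mpr ⟨by simpa using hv₂, fun a h => ?_⟩
    simp only [Matrix.cons_val_one, Matrix.head_cons, Matrix.cons_val_zero] at h
    exact h21 (by rw [← h, map_smul, hv₂2, smul_eq_mul, mul_zero])
  · refine linearIndependent_fin2.mpr ⟨by simpa using hv₃, fun a h => ?_⟩
    simp only [Matrix.cons_val_one, Matrix.head_cons, Matrix.cons_val_zero] at h
    have hc : (a * α) • p₂ + (a * β) • p₃ = p₁ := by
      rw [← h, ← hαβ]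
      module
    have h0 := Fintype.linearIndependent_iff.mp hgenp ![-1, a * α, a * β] (by
      rw [Fin.sum_univ_three]
      simp only [Matrix.cons_val_zero, Matrix.cons_val_one, Matrix.head_cons,
        Matrix.cons_val_two, Matrix.tail_cons]
      rw [← hc]
      module) 0
    simp at h0
  · refine linearIndependent_fin2.mpr ⟨by simpa using hv₄, fun a h => ?_⟩
    simp only [Matrix.cons_val_one, Matrix.head_cons, Matrix.cons_val_zero] at h
    exact h31 (by rw [← h, map_smul, hv₄3, smul_eq_mul, mul_zero])
  · refine linearIndependent_fin2.mpr ⟨by simpa using hv₃, fun a h => ?_⟩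
    simp only [Matrix.cons_val_one, Matrix.head_cons, Matrix.cons_val_zero] at h
    have h2 : (0 : K) = a * (β * φ₂ p₃) := by
      rw [← hv₂2, ← h, map_smul, hv₃2, smul_eq_mul]
    have ha : a = 0 := by
      rcases mul_eq_zero.mp h2.symm with h' | h'
      · exact h'
      · exact absurd h' (mul_ne_zero hβ h23)
    exact hv₂ (by rw [← h, ha, zero_smul])
  · refine linearIndependent_fin2.mpr ⟨by simpa using hv₄, fun a h => ?_⟩
    simp only [Matrix.cons_val_one, Matrix.head_cons, Matrix.cons_val_zero] at h
    have h2 : (0 : K) = a * φ₂ v₄ := by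
      rw [← hv₂2, ← h, map_smul, smul_eq_mul]
    have ha : a = 0 := by
      rcases mul_eq_zero.mp h2.symm with h' | h'
      · exact h'
      · exact absurd h' hs
    exact hv₂ (by rw [← h, ha, zero_smul])
  · refine linearIndependent_fin2.mpr ⟨by simpa using hv₄, fun a h => ?_⟩
    simp only [Matrix.cons_val_one, Matrix.head_cons, Matrix.cons_val_zero] at h
    have h2 : α * φ₃ p₂ = 0 := by
      rw [← hv₃3, ← h, map_smul, hv₄3, smul_eq_mul, mul_zero]
    exact (mul_ne_zero hα h32) h2
  -- the cross ratio computation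
  intro m hm
  set d := (phiMat φ₁ φ₂ φ₃).det with hd_def
  have hd : d ≠ 0 := phiMat_det_ne_zero hgenφ
  have B12 := phiMat_det_mul_det3 φ₁ φ₂ φ₃ m p₁ v₂ hf₁ hv₂1
  have B34 := phiMat_det_mul_det3 φ₁ φ₂ φ₃ m v₃ v₄ hv₃1 hv₄1
  have B14 := phiMat_det_mul_det3 φ₁ φ₂ φ₃ m p₁ v₄ hf₁ hv₄1
  have B23 := phiMat_det_mul_det3 φ₁ φ₂ φ₃ m v₂ v₃ hv₂1 hv₃1
  rw [hv₂2] at B12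
  rw [hv₃2, hv₃3, hv₄3] at B34
  rw [hv₄3] at B14
  rw [hv₂2, hv₃2, hv₃3] at B23
  have E12 : det3 m p₁ v₂ = φ₁ m * (φ₂ p₁ * φ₃ v₂) / d := by
    rw [eq_div_iff hd]; linear_combination B12
  have E34 : det3 m v₃ v₄ = -(φ₁ m * (α * φ₃ p₂ * φ₂ v₄)) / d := by
    rw [eq_div_iff hd]; linear_combination B34
  have E14 : det3 m p₁ v₄ = -(φ₁ m * (φ₃ p₁ * φ₂ v₄)) / d := by
    rw [eq_div_iff hd]; linear_combination B14
  have E23 : det3 m v₂ v₃ = -(φ₁ m * (φ₃ v₂ * (β * φ₂ p₃))) / d := by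
    rw [eq_div_iff hd]; linear_combination B23
  have main : crossRatioBracket m p₁ v₂ v₃ v₄ = (Tri p₁ p₂ p₃ φ₁ φ₂ φ₃)⁻¹ := by
    rw [crossRatioBracket, E12, E34, E14, E23, Tri, inv_div,
      div_mul_div_comm, div_mul_div_comm, div_div_div_cancel_right₀ (mul_ne_zero hd hd),
      div_eq_div_iff
        (mul_ne_zero (neg_ne_zero.mpr (mul_ne_zero hm (mul_ne_zero h31 hs)))
          (neg_ne_zero.mpr (mul_ne_zero hm (mul_ne_zero ht (mul_ne_zero hβ h23)))))
        (mul_ne_zero (mul_ne_zero h12 h23) h31)]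
    linear_combination (-(φ₁ m ^ 2 * φ₂ p₁ * φ₃ v₂ * φ₃ p₂ * φ₂ v₄ * φ₂ p₃ * φ₃ p₁)) * e1
  refine ⟨main, ?_⟩
  rw [main, Tri, Tri, inv_div]
  ring
end
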